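/- arXiv:2305.07035 — 7 statements merged into one kernel-verified Lean document; each statement's English description precedes it below -/
import Mathlib

section
/- In the logic of clandestine operations, if E ∩ F = ∅ then K_E ¬K_F φ → ¬H_F φ is derivable. -/
/-- Formulas of the logic of clandestine operations: propositional variables,
falsum, negation, implication, distributed knowledge `know C φ` and
clandestine power `how C φ` for coalitions `C ⊆ Ag`. -/
inductive Formula (α : Type) (Ag : Type) : Type
  | var  : α → Formula α Ag
  | bot  : Formula α Ag
  | neg  : Formula α Ag → Formula α Ag
  | imp  : Formula α Ag → Formula α Ag → Formula α Ag
  | know : Set Ag → Formula α Ag → Formula α Ag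
  | how  : Set Ag → Formula α Ag → Formula α Ag

namespace Formula

/-- Defined disjunction. -/
def or {α Ag : Type} (φ ψ : Formula α Ag) : Formula α Ag := imp (neg φ) ψ

/-- Defined verum. -/
def top {α Ag : Type} : Formula α Ag := neg bot

/-- Boolean evaluation treating variables and modal formulas as atoms. -/
def eval {α Ag : Type} (v : Formula α Ag → Bool) : Formula α Ag → Bool
  | var p => v (var p)
  | bot => false
  | neg φ => !(eval v φ)
  | imp φ ψ => !(eval v φ) || eval v ψ
  | know C φ => v (know C φ)
  | how C φ => v (how C φ)

end Formula

/-- A propositional tautology: true under every Boolean valuation of its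
atoms (variables and modal subformulas). -/
def Tautology {α Ag : Type} (φ : Formula α Ag) : Prop :=
  ∀ v, φ.eval v = true

/-- Theorems of the logic of clandestine operations. -/
inductive Prov {α Ag : Type} : Formula α Ag → Prop
  | taut {φ} : Tautology φ → Prov φ
  | truth (C : Set Ag) (φ) : Prov (.imp (.know C φ) φ)
  | negIntro (C : Set Ag) (φ) :
      Prov (.imp (.neg (.know C φ)) (.know C (.neg (.know C φ))))
  | distrib (C : Set Ag) (φ ψ) :
      Prov (.imp (.know C (.imp φ ψ)) (.imp (.know C φ) (.know C ψ)))
  | mono {C' C : Set Ag} (φ) : C' ⊆ C → Prov (.imp (.know C' φ) (.know C φ))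
  | stratIntro (C : Set Ag) (φ) : Prov (.imp (.how C φ) (.know C (.how C φ)))
  | cia {C I A : Set Ag} (φ ψ) : C ∩ (I ∪ A) = ∅ →
      Prov (.imp
        (.know (C ∪ I) (.know (A ∪ I) (.imp (.know C φ) (.know (C ∪ I) ψ))))
        (.imp (.how C φ) (.how (C ∪ I) ψ)))
  | nonterm (C : Set Ag) : Prov (.neg (.how C .bot))
  | emptyCoal (φ : Formula α Ag) : Prov (.neg (.how ∅ φ))
  | mp {φ ψ} : Prov (.imp φ ψ) → Prov φ → Prov ψ
  | necK (C : Set Ag) {φ} : Prov φ → Prov (.know C φ)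
  | necH {C : Set Ag} {φ} : C ≠ ∅ → Prov φ → Prov (.how C φ)

/-- Derivability from a set of hypotheses `X`: from theorems of the system
and members of `X` using Modus Ponens only. -/
inductive ProvFrom {α Ag : Type} (X : Set (Formula α Ag)) : Formula α Ag → Prop
  | hyp {φ} : φ ∈ X → ProvFrom X φ
  | thm {φ} : Prov φ → ProvFrom X φ
  | mp {φ ψ} : ProvFrom X (.imp φ ψ) → ProvFrom X φ → ProvFrom X ψ

/-- A set of formulas is consistent if falsum is not derivable from it. -/
def Consistent {α Ag : Type} (X : Set (Formula α Ag)) : Prop :=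
  ¬ ProvFrom X .bot

/-- Maximal consistent set of formulas. -/
def MCS {α Ag : Type} (X : Set (Formula α Ag)) : Prop :=
  Consistent X ∧ ∀ φ : Formula α Ag, φ ∈ X ∨ .neg φ ∈ X

namespace ProofAux

open Formula

/-- Chaining implications. -/
lemma imp_trans {α Ag : Type} {a b c : Formula α Ag}
    (h1 : Prov (.imp a b)) (h2 : Prov (.imp b c)) : Prov (.imp a c) := by
  have t : Tautology (Formula.imp (.imp a b) (.imp (.imp b c) (.imp a c))) := by
    intro v
    simp only [Formula.eval]
    cases a.eval v <;> cases b.eval v <;> cases c.eval v <;> simp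
  exact (Prov.taut t).mp h1 |>.mp h2

/-- Distribute knowledge over a proved implication. -/
lemma kdist {α Ag : Type} (C : Set Ag) {a b : Formula α Ag}
    (h1 : Prov (.imp a b)) : Prov (.imp (.know C a) (.know C b)) :=
  (Prov.distrib C a b).mp (Prov.necK C h1)

/-- Positive introspection (axiom 4), derivable in S5. -/
lemma posIntro {α Ag : Type} (C : Set Ag) (χ : Formula α Ag) :
    Prov (.imp (.know C χ) (.know C (.know C χ))) := by
  -- From negIntro, get ¬K¬Kχ → Kχ (propositional consequence).
  have h5 : Prov (Formula.imp (.neg (.know C χ)) (.know C (.neg (.know C χ)))) :=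
    Prov.negIntro C χ
  have contrap : Prov (Formula.imp (.neg (.know C (.neg (.know C χ)))) (.know C χ)) := by
    have t : Tautology (Formula.imp
        (.imp (.neg (.know C χ)) (.know C (.neg (.know C χ))))
        (.imp (.neg (.know C (.neg (.know C χ)))) (.know C χ))) := by
      intro v
      simp only [Formula.eval]
      cases v (Formula.know C χ) <;> cases v (Formula.know C (.neg (.know C χ))) <;> simp
    exact (Prov.taut t).mp h5
  -- K(¬K¬Kχ → Kχ) hence K¬K¬Kχ → KKχ
  have step1 : Prov (Formula.imp (.know C (.neg (.know C (.neg (.know C χ)))))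
      (.know C (.know C χ))) := kdist C contrap
  -- Kχ → ¬K¬Kχ  (from truth axiom, contrapositive)
  have ht : Prov (Formula.imp (.know C (.neg (.know C χ))) (.neg (.know C χ))) :=
    Prov.truth C (.neg (.know C χ))
  have step2 : Prov (Formula.imp (.know C χ) (.neg (.know C (.neg (.know C χ))))) := by
    have t : Tautology (Formula.imp
        (.imp (.know C (.neg (.know C χ))) (.neg (.know C χ)))
        (.imp (.know C χ) (.neg (.know C (.neg (.know C χ)))))) := by
      intro v
      simp only [Formula.eval]
      cases v (Formula.know C χ) <;> cases v (Formula.know C (.neg (.know C χ))) <;> simp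
    exact (Prov.taut t).mp ht
  -- ¬K¬Kχ → K¬K¬Kχ  (negative introspection)
  have step3 : Prov (Formula.imp (.neg (.know C (.neg (.know C χ))))
      (.know C (.neg (.know C (.neg (.know C χ)))))) :=
    Prov.negIntro C (.neg (.know C χ))
  exact imp_trans (imp_trans step2 step3) step1

end ProofAux

/-- `K_E ¬K_F φ → ¬H_F φ` is derivable when `E ∩ F = ∅`. -/
theorem know_neg_know_to_neg_how {α Ag : Type} {E F : Set Ag}
    (h : E ∩ F = ∅) (φ : Formula α Ag) :
    Prov (.imp (.know E (.neg (.know F φ))) (.neg (.how F φ))) := by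
  open ProofAux in
  set N : Formula α Ag := .neg (.know F φ) with hN
  set χ : Formula α Ag := .imp (.know F φ) (.know (F ∪ E) .bot) with hχ
  -- ¬K_F φ → (K_F φ → K_{F∪E} ⊥) is a tautology
  have t1 : Prov (Formula.imp N χ) := by
    apply Prov.taut
    intro v
    simp only [hN, hχ, Formula.eval]
    cases v (Formula.know F φ) <;> simp
  -- K_E N → K_E χ, hence K_E K_E N → K_E K_E χ
  have d1 : Prov (Formula.imp (.know E N) (.know E χ)) := kdist E t1
  have d2 : Prov (Formula.imp (.know E (.know E N)) (.know E (.know E χ))) := kdist E d1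
  -- K_E N → K_E K_E N (positive introspection)
  have pi : Prov (Formula.imp (.know E N) (.know E (.know E N))) := posIntro E N
  -- K_E K_E χ → K_{F∪E} K_E χ (monotonicity)
  have m : Prov (Formula.imp (.know E (.know E χ)) (.know (F ∪ E) (.know E χ))) :=
    Prov.mono _ (Set.subset_union_right)
  have chain : Prov (Formula.imp (.know E N) (.know (F ∪ E) (.know E χ))) :=
    imp_trans (imp_trans pi d2) m
  -- CIA axiom with C = F, I = E, A = ∅, ψ = ⊥
  have hc : F ∩ (E ∪ (∅ : Set Ag)) = ∅ := by
    rw [Set.union_empty, Set.inter_comm]; exact h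
  have cia := Prov.cia (C := F) (I := E) (A := ∅) φ Formula.bot hc
  rw [Set.empty_union] at cia
  -- cia : K_{F∪E} K_E χ → (H_F φ → H_{F∪E} ⊥)
  have big : Prov (Formula.imp (.know E N) (.imp (.how F φ) (.how (F ∪ E) .bot))) :=
    imp_trans chain cia
  have nt : Prov (Formula.neg (.how (F ∪ E) (Formula.bot : Formula α Ag))) :=
    Prov.nonterm (F ∪ E)
  -- Combine: (X → (h → b)) and ¬b yield X → ¬h
  have t2 : Tautology (Formula.imp
      (.imp (.know E N) (.imp (.how F φ) (.how (F ∪ E) .bot)))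
      (.imp (.neg (.how (F ∪ E) .bot))
        (.imp (.know E N) (.neg (.how F φ))))) := by
    intro v
    simp only [Formula.eval]
    cases v (Formula.know E N) <;> cases v (Formula.how F φ) <;>
      cases v (Formula.how (F ∪ E) Formula.bot) <;> simp
  exact ((Prov.taut t2).mp big).mp nt
end

section
/- In the logic of clandestine operations, if F ⊄ E (F is not a subset of E), then the formula K_F K_E K_F φ → H_F φ is derivable. -/
namespace Prov

variable {α Ag : Type}

/-- Tautology `p → (q → p)`. -/
lemma imp_intro (p q : Formula α Ag) : Prov (.imp p (.imp q p)) := by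
  apply Prov.taut
  intro v
  simp only [Formula.eval]
  cases p.eval v <;> cases q.eval v <;> rfl

/-- Transitivity of implication. -/
lemma imp_trans {p q r : Formula α Ag} (h1 : Prov (.imp p q))
    (h2 : Prov (.imp q r)) : Prov (.imp p r) := by
  have t : Prov (.imp (.imp p q) (.imp (.imp q r) (.imp p r))) := by
    apply Prov.taut
    intro v
    simp only [Formula.eval]
    cases p.eval v <;> cases q.eval v <;> cases r.eval v <;> rfl
  exact (t.mp h1).mp h2

/-- From `p → (q → r)` and `q`, derive `p → r`. -/
lemma imp_swap_mp {p q r : Formula α Ag} (h1 : Prov (.imp p (.imp q r)))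
    (h2 : Prov q) : Prov (.imp p r) := by
  have t : Prov (.imp (.imp p (.imp q r)) (.imp q (.imp p r))) := by
    apply Prov.taut
    intro v
    simp only [Formula.eval]
    cases p.eval v <;> cases q.eval v <;> cases r.eval v <;> rfl
  exact ((t.mp h1).mp h2)

/-- Knowledge distribution as a rule. -/
lemma knowMono {p q : Formula α Ag} (C : Set Ag) (h : Prov (.imp p q)) :
    Prov (.imp (.know C p) (.know C q)) :=
  (Prov.distrib C p q).mp (Prov.necK C h)

/-- Verum is provable. -/
lemma top_prov : Prov (Formula.top (α := α) (Ag := Ag)) := by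
  apply Prov.taut
  intro v
  rfl

end Prov

/-- `K_F K_E K_F φ → H_F φ` is derivable when `F ⊄ E`. -/
theorem KKK_to_how {α Ag : Type} {E F : Set Ag} (h : ¬ F ⊆ E)
    (φ : Formula α Ag) :
    Prov (.imp (.know F (.know E (.know F φ))) (.how F φ)) := by
  obtain ⟨a, haF, haE⟩ := Set.not_subset.mp h
  set C : Set Ag := {a} with hC
  set I : Set Ag := F \ {a} with hI
  have hCI : C ∪ I = F :=
    Set.union_diff_cancel (Set.singleton_subset_iff.mpr haF)
  have hdisj : C ∩ (I ∪ E) = ∅ := by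
    apply Set.eq_empty_iff_forall_notMem.mpr
    rintro x ⟨hx1, hx2⟩
    rw [hC, Set.mem_singleton_iff] at hx1
    subst hx1
    simp [hI, haE] at hx2
  -- the CIA axiom instance
  have cia := Prov.cia (C := C) (I := I) (A := E) Formula.top φ hdisj
  rw [hCI] at cia
  -- cia : Prov (imp (know F (know (E∪I) (imp (know C ⊤) (know F φ))))
  --             (imp (how C ⊤) (how F φ)))
  -- Step: K_E K_F φ → K_{E∪I} (K_C ⊤ → K_F φ)
  have s1 : Prov (.imp (.know F φ) (.imp (.know C Formula.top) (.know F φ))) :=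
    Prov.imp_intro _ _
  have s2 : Prov (.imp (.know (E ∪ I) (.know F φ))
      (.know (E ∪ I) (.imp (.know C Formula.top) (.know F φ)))) :=
    Prov.knowMono _ s1
  have s3 : Prov (.imp (.know E (.know F φ)) (.know (E ∪ I) (.know F φ))) :=
    Prov.mono _ Set.subset_union_left
  have s4 : Prov (.imp (.know E (.know F φ))
      (.know (E ∪ I) (.imp (.know C Formula.top) (.know F φ)))) :=
    Prov.imp_trans s3 s2
  have s5 : Prov (.imp (.know F (.know E (.know F φ)))
      (.know F (.know (E ∪ I) (.imp (.know C Formula.top) (.know F φ))))) :=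
    Prov.knowMono _ s4
  have s6 : Prov (.imp (.know F (.know E (.know F φ)))
      (.imp (.how C Formula.top) (.how F φ))) :=
    Prov.imp_trans s5 cia
  have hH : Prov (Formula.how C (Formula.top (α := α) (Ag := Ag))) := by
    refine Prov.necH ?_ Prov.top_prov
    simp [hC]
  exact Prov.imp_swap_mp s6 hH
end

section
/- The Strategic Introspection axiom is sound: for any state w of a clandestine game, if w ⊨ H_C φ then w ⊨ K_C H_C φ. -/
/-- A clandestine game. -/
structure Game (α Ag : Type) where
  W : Type
  sim : Ag → W → W → Prop
  sim_equiv : ∀ a, Equivalence (sim a)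
  Δ : Type
  Δ_nonempty : Nonempty Δ
  M : W → Set Ag → Δ → W → Prop
  concealment : ∀ w C δ u, M w C δ u → ∀ a ∉ C, sim a w u
  nonterm : ∀ w C δ, ∃ u, M w C δ u
  π : α → Set W

/-- Coalition indistinguishability: `w ∼_C u` iff `w ∼_a u` for all `a ∈ C`. -/
def Game.simC {α Ag : Type} (G : Game α Ag) (C : Set Ag) (w u : G.W) : Prop :=
  ∀ a ∈ C, G.sim a w u

/-- Satisfaction relation for clandestine games. -/
def Game.Sat {α Ag : Type} (G : Game α Ag) : G.W → Formula α Ag → Prop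
  | w, .var p => w ∈ G.π p
  | _, .bot => False
  | w, .neg φ => ¬ G.Sat w φ
  | w, .imp φ ψ => G.Sat w φ → G.Sat w ψ
  | w, .know C φ => ∀ u, G.simC C w u → G.Sat u φ
  | w, .how C φ => ∃ C', C' ⊆ C ∧ C'.Nonempty ∧ ∃ δ : G.Δ,
      ∀ w' u u', G.simC C w w' → G.M w' C' δ u → G.simC C u u' → G.Sat u' φ

/-- Soundness of Strategic Introspection: if `w ⊨ H_C φ` then
`w ⊨ K_C H_C φ`. -/
theorem strategic_introspection_sound {α Ag : Type} (G : Game α Ag)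
    (w : G.W) (C : Set Ag) (φ : Formula α Ag)
    (h : G.Sat w (.how C φ)) : G.Sat w (.know C (.how C φ)) := by
  intro u hwu
  obtain ⟨C', hC', hne, δ, hδ⟩ := h
  exact ⟨C', hC', hne, δ, fun w' x x' huw' hM hs =>
    hδ w' x x' (fun a ha => (G.sim_equiv a).trans (hwu a ha) (huw' a ha)) hM hs⟩
end

section
/- The Coalition-Informant-Adversary axiom is sound: for any state w of a clandestine game and coalitions C, I, A with C ∩ (I ∪ A) = ∅, if w ⊨ K_{C∪I} K_{A∪I}(K_C φ → K_{C∪I} ψ) and w ⊨ H_C φ, then w ⊨ H_{C∪I} ψ. -/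
/-- Soundness of the Coalition-Informant-Adversary axiom. -/
theorem cia_sound {α Ag : Type} (G : Game α Ag) (w : G.W)
    {C I A : Set Ag} (φ ψ : Formula α Ag) (hdisj : C ∩ (I ∪ A) = ∅)
    (h1 : G.Sat w (.know (C ∪ I)
            (.know (A ∪ I) (.imp (.know C φ) (.know (C ∪ I) ψ)))))
    (h2 : G.Sat w (.how C φ)) :
    G.Sat w (.how (C ∪ I) ψ) := by
  obtain ⟨C', hC'sub, hC'ne, δ, hδ⟩ := h2
  refine ⟨C', hC'sub.trans Set.subset_union_left, hC'ne, δ, ?_⟩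
  intro w' u u' hww' hM huu'
  -- w' ∼_{A∪I} u by concealment (members of A∪I are not in C' ⊆ C)
  have hconceal : G.simC (A ∪ I) w' u := by
    intro a ha
    apply G.concealment w' C' δ u hM
    intro haC'
    have : a ∈ C ∩ (I ∪ A) := ⟨hC'sub haC', ha.symm⟩
    rw [hdisj] at this
    exact this
  have h3 : G.Sat u (.imp (.know C φ) (.know (C ∪ I) ψ)) :=
    h1 w' hww' u hconceal
  have hKC : G.Sat u (.know C φ) := by
    intro t hut
    exact hδ w' u t (fun a ha => hww' a (Or.inl ha)) hM hut
  exact h3 hKC u' huu'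
end

section
/- Full soundness of the logic of clandestine operations: for any state w of a clandestine game and any set X of formulas, if w ⊨ χ for all χ ∈ X and X ⊢ φ, then w ⊨ φ. -/
/-!
Soundness is proved by induction on derivations: every axiom holds at every state of every game,
and Modus Ponens and both Necessitation rules preserve validity. The only axiom with real content
is Coalition-Informant-Adversary. If `C` achieves `φ` by letting its part `C' ⊆ C` perform `δ`,
then by concealment no agent of `A ∪ I` (disjoint from `C`) can tell the start state of that
operation from its end state. So `K_{A ∪ I}(K_C φ → K_{C ∪ I} ψ)` at the start state transfers
to the end state, where `K_C φ` holds, and yields `ψ` on its whole `∼_{C ∪ I}`-class.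
-/

namespace Game

variable {α Ag : Type} (G : Game α Ag)

theorem simC_equivalence (C : Set Ag) : Equivalence (G.simC C) where
  refl w a _ := (G.sim_equiv a).refl w
  symm h a ha := (G.sim_equiv a).symm (h a ha)
  trans h h' a ha := (G.sim_equiv a).trans (h a ha) (h' a ha)

variable {G}

theorem simC_anti {C' C : Set Ag} (hsub : C' ⊆ C) {w u : G.W} (h : G.simC C w u) :
    G.simC C' w u :=
  fun a ha ↦ h a (hsub ha)

theorem simC_of_M {w u : G.W} {C' D : Set Ag} {δ : G.Δ} (hM : G.M w C' δ u)
    (hD : Disjoint D C') : G.simC D w u :=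
  fun a ha ↦ G.concealment w C' δ u hM a (Set.disjoint_left.mp hD ha)

variable (G)

theorem eval_eq_true_iff_sat {w : G.W} {v : Formula α Ag → Bool}
    (hv : ∀ ψ, v ψ = true ↔ G.Sat w ψ) (φ : Formula α Ag) : φ.eval v = true ↔ G.Sat w φ := by
  induction φ <;> simp [Formula.eval, Sat, imp_iff_not_or, ← Bool.not_eq_true, *]

theorem sat_of_tautology {φ : Formula α Ag} (h : Tautology φ) (w : G.W) : G.Sat w φ := by
  classical
  exact (G.eval_eq_true_iff_sat (fun ψ ↦ decide_eq_true_iff) φ).mp (h _)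

theorem sat_how_imp_know_how (C : Set Ag) (φ : Formula α Ag) (w : G.W) :
    G.Sat w (.imp (.how C φ) (.know C (.how C φ))) := by
  rintro ⟨C', hsub, hne, δ, hδ⟩ v hwv
  exact ⟨C', hsub, hne, δ, fun w' u u' hvw' ↦ hδ w' u u' ((G.simC_equivalence C).trans hwv hvw')⟩

theorem sat_cia {C I A : Set Ag} (hdisj : C ∩ (I ∪ A) = ∅) (φ ψ : Formula α Ag) (w : G.W) :
    G.Sat w (.imp
      (.know (C ∪ I) (.know (A ∪ I) (.imp (.know C φ) (.know (C ∪ I) ψ))))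
      (.imp (.how C φ) (.how (C ∪ I) ψ))) := by
  rintro hK ⟨C', hsub, hne, δ, hδ⟩
  refine ⟨C', hsub.trans Set.subset_union_left, hne, δ, fun w' u u' hww' hM huu' ↦ ?_⟩
  have hconceal : G.simC (A ∪ I) w' u := by
    refine simC_of_M hM (Set.disjoint_of_subset_right hsub ?_)
    rw [Set.disjoint_iff_inter_eq_empty, Set.inter_comm, Set.union_comm]
    exact hdisj
  have hknow : G.Sat u (.know C φ) :=
    fun v huv ↦ hδ w' u v (simC_anti Set.subset_union_left hww') hM huv
  exact hK w' hww' u hconceal hknow u' huu'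

theorem sat_neg_how_bot (C : Set Ag) (w : G.W) : G.Sat w (.neg (.how C .bot)) := by
  rintro ⟨C', -, -, δ, hδ⟩
  obtain ⟨u, hu⟩ := G.nonterm w C' δ
  exact hδ w u u ((G.simC_equivalence C).refl w) hu ((G.simC_equivalence C).refl u)

theorem sat_how_of_forall {C : Set Ag} (hC : C ≠ ∅) {φ : Formula α Ag}
    (h : ∀ u, G.Sat u φ) (w : G.W) : G.Sat w (.how C φ) :=
  let ⟨δ⟩ := G.Δ_nonempty
  ⟨C, subset_rfl, Set.nonempty_iff_ne_empty.mpr hC, δ, fun _ _ u' _ _ _ ↦ h u'⟩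

theorem sat_of_prov {φ : Formula α Ag} (h : Prov φ) (w : G.W) : G.Sat w φ := by
  induction h generalizing w with
  | taut ht => exact G.sat_of_tautology ht w
  | truth C φ => exact fun hK ↦ hK w ((G.simC_equivalence C).refl w)
  | negIntro C φ =>
    exact fun hn u hwu hu ↦
      hn fun v huv ↦ hu v ((G.simC_equivalence C).trans ((G.simC_equivalence C).symm hwu) huv)
  | distrib C φ ψ => exact fun himp hφ u hu ↦ himp u hu (hφ u hu)
  | mono φ hsub => exact fun hK u hu ↦ hK u (simC_anti hsub hu)
  | stratIntro C φ => exact G.sat_how_imp_know_how C φ w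
  | cia φ ψ hdisj => exact G.sat_cia hdisj φ ψ w
  | nonterm C => exact G.sat_neg_how_bot C w
  | emptyCoal φ => exact fun ⟨_, hsub, hne, _⟩ ↦ hne.ne_empty (Set.subset_empty_iff.mp hsub)
  | mp _ _ ihimp ih => exact ihimp w (ih w)
  | necK C _ ih => exact fun u _ ↦ ih u
  | necH hC _ ih => exact G.sat_how_of_forall hC ih w

end Game

/-- Full soundness: if `w ⊨ χ` for all `χ ∈ X` and `X ⊢ φ`, then `w ⊨ φ`. -/
theorem soundness {α Ag : Type} (G : Game α Ag) (w : G.W)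
    {X : Set (Formula α Ag)} {φ : Formula α Ag}
    (hX : ∀ χ ∈ X, G.Sat w χ) (h : ProvFrom X φ) : G.Sat w φ := by
  induction h with
  | hyp hmem => exact hX _ hmem
  | thm hprov => exact G.sat_of_prov hprov w
  | mp _ _ ihimp ih => exact ihimp ih
end

section
/- Canonical model knowledge-transport lemma: in the canonical tree of maximal consistent sets, for a state X₀,C₁,…,Xₙ,C_{n+1},X_{n+1} and any coalition D ⊆ C_{n+1}, a formula K_D φ belongs to Xₙ if and only if it belongs to X_{n+1}. -/
/-- Canonical states are lists of (coalition, maximal consistent set) steps,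
most recent step first, rooted at the fixed maximal consistent set `X₀`.
`hd X₀ w` is the maximal consistent set labelling the node `w`. -/
def hd {α Ag : Type} (X₀ : Set (Formula α Ag)) :
    List (Set Ag × Set (Formula α Ag)) → Set (Formula α Ag)
  | [] => X₀
  | (_, X) :: _ => X

/-- The canonical-state condition: every set along the path is maximal
consistent and contains everything known (to the edge coalition) at its
parent. -/
def IsCanState {α Ag : Type} (X₀ : Set (Formula α Ag)) :
    List (Set Ag × Set (Formula α Ag)) → Prop
  | [] => True
  | (C, X) :: w => IsCanState X₀ w ∧ MCS X ∧
      {φ : Formula α Ag | Formula.know C φ ∈ hd X₀ w} ⊆ X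

/-- Canonical indistinguishability for agent `a`: all edges on the simple
tree path between `w` and `w'` (through a common ancestor `v`) are labelled
with a coalition containing `a`. -/
def CSim {α Ag : Type} (a : Ag)
    (w w' : List (Set Ag × Set (Formula α Ag))) : Prop :=
  ∃ v, v <:+ w ∧ v <:+ w' ∧
    (∀ p ∈ w.take (w.length - v.length), a ∈ p.1) ∧
    (∀ p ∈ w'.take (w'.length - v.length), a ∈ p.1)

/-- Canonical coalition indistinguishability. -/
def CSimC {α Ag : Type} (C : Set Ag)
    (w w' : List (Set Ag × Set (Formula α Ag))) : Prop :=
  ∀ a ∈ C, CSim a w w'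

/-- The canonical mechanism: `(w, C, φ, u) ∈ M` iff `w ∼_{𝒜∖C} u` and
`H_C φ ∈ hd w` implies `K_C φ ∈ hd u`. -/
def CanM {α Ag : Type} (X₀ : Set (Formula α Ag))
    (w : List (Set Ag × Set (Formula α Ag))) (C : Set Ag) (φ : Formula α Ag)
    (u : List (Set Ag × Set (Formula α Ag))) : Prop :=
  CSimC Cᶜ w u ∧ (Formula.how C φ ∈ hd X₀ w → Formula.know C φ ∈ hd X₀ u)

section Aux
variable {α Ag : Type}

open Formula

lemma taut_mp {φ ψ : Formula α Ag}
    (h : ∀ v, (φ.eval v) = true → (ψ.eval v) = true)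
    : Prov (Formula.imp φ ψ) := by
  apply Prov.taut
  intro v
  simp [Formula.eval]
  by_cases hφ : φ.eval v = true
  · simp [hφ, h v hφ]
  · simp at hφ; simp [hφ]

lemma prov_trans {φ ψ χ : Formula α Ag} (h1 : Prov (Formula.imp φ ψ))
    (h2 : Prov (Formula.imp ψ χ)) : Prov (Formula.imp φ χ) := by
  have t : Prov (Formula.imp (Formula.imp φ ψ) (Formula.imp (Formula.imp ψ χ) (Formula.imp φ χ))) := by
    apply Prov.taut; intro v; simp only [Formula.eval]
    cases Formula.eval v φ <;> cases Formula.eval v ψ <;> cases Formula.eval v χ <;> simp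
  exact Prov.mp (Prov.mp t h1) h2

/-- MCS is deductively closed. -/
lemma mcs_closed {X : Set (Formula α Ag)} (hX : MCS X) {φ : Formula α Ag}
    (h : ProvFrom X φ) : φ ∈ X := by
  rcases hX.2 φ with hm | hm
  · exact hm
  · exfalso
    apply hX.1
    have t : Prov (Formula.imp φ (Formula.imp (Formula.neg φ) Formula.bot)) := by
      apply Prov.taut; intro v; simp [Formula.eval]
    exact ProvFrom.mp (ProvFrom.mp (ProvFrom.thm t) h) (ProvFrom.hyp hm)

lemma mcs_mp {X : Set (Formula α Ag)} (hX : MCS X) {φ ψ : Formula α Ag}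
    (h : Prov (Formula.imp φ ψ)) (hm : φ ∈ X) : ψ ∈ X :=
  mcs_closed hX (ProvFrom.mp (ProvFrom.thm h) (ProvFrom.hyp hm))

lemma mcs_neg_not_mem {X : Set (Formula α Ag)} (hX : MCS X) {φ : Formula α Ag}
    (h : Formula.neg φ ∈ X) : φ ∉ X := by
  intro hm
  apply hX.1
  have t : Prov (Formula.imp φ (Formula.imp (Formula.neg φ) Formula.bot)) := by
    apply Prov.taut; intro v; simp [Formula.eval]
  exact ProvFrom.mp (ProvFrom.mp (ProvFrom.thm t) (ProvFrom.hyp hm)) (ProvFrom.hyp h)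

lemma mcs_not_mem_neg {X : Set (Formula α Ag)} (hX : MCS X) {φ : Formula α Ag}
    (h : φ ∉ X) : Formula.neg φ ∈ X := (hX.2 φ).resolve_left h

/-- Positive introspection, derived from T and 5. -/
lemma prov_posIntro (D : Set Ag) (φ : Formula α Ag) :
    Prov (Formula.imp (Formula.know D φ) (Formula.know D (Formula.know D φ))) := by
  -- step a: Kφ → ¬K¬Kφ  (contrapositive of T at ¬Kφ)
  have hT : Prov (Formula.imp (Formula.know D (Formula.neg (Formula.know D φ)))
      (Formula.neg (Formula.know D φ))) := Prov.truth D _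
  have ha : Prov (Formula.imp (Formula.know D φ)
      (Formula.neg (Formula.know D (Formula.neg (Formula.know D φ))))) := by
    have t : Prov (Formula.imp
        (Formula.imp (Formula.know D (Formula.neg (Formula.know D φ))) (Formula.neg (Formula.know D φ)))
        (Formula.imp (Formula.know D φ)
          (Formula.neg (Formula.know D (Formula.neg (Formula.know D φ)))))) := by
      apply Prov.taut; intro v; simp only [Formula.eval]
      cases v (Formula.know D (Formula.neg (Formula.know D φ))) <;> cases v (Formula.know D φ) <;> simp
    exact Prov.mp t hT
  -- step b: ¬K¬Kφ → K¬K¬Kφ  (5 at ¬Kφ)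
  have hb := Prov.negIntro D (Formula.neg (Formula.know D φ))
  have hab := prov_trans ha hb
  -- step c: ¬K¬Kφ → Kφ  (from 5 at φ, classically)
  have h5 := Prov.negIntro D φ
  have hc : Prov (Formula.imp (Formula.neg (Formula.know D (Formula.neg (Formula.know D φ))))
      (Formula.know D φ)) := by
    have t : Prov (Formula.imp
        (Formula.imp (Formula.neg (Formula.know D φ)) (Formula.know D (Formula.neg (Formula.know D φ))))
        (Formula.imp (Formula.neg (Formula.know D (Formula.neg (Formula.know D φ))))
          (Formula.know D φ))) := by
      apply Prov.taut; intro v; simp only [Formula.eval]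
      cases v (Formula.know D (Formula.neg (Formula.know D φ))) <;> cases v (Formula.know D φ) <;> simp
    exact Prov.mp t h5
  -- necessitate c and distribute
  have hd := Prov.necK D hc
  have he := Prov.mp (Prov.distrib D _ _) hd
  exact prov_trans hab he

lemma mcs_hd {X₀ : Set (Formula α Ag)} (hX₀ : MCS X₀)
    {w : List (Set Ag × Set (Formula α Ag))} (hw : IsCanState X₀ w) :
    MCS (hd X₀ w) := by
  cases w with
  | nil => exact hX₀
  | cons p w' => exact hw.2.1

end Aux

/-- Knowledge-transport lemma: for a canonical state with last step
`(C, X)` over the node `w` and any `D ⊆ C`, `K_D φ ∈ hd w ↔ K_D φ ∈ X`. -/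
theorem knowledge_transport {α Ag : Type} {X₀ : Set (Formula α Ag)}
    (hX₀ : MCS X₀) {w : List (Set Ag × Set (Formula α Ag))}
    {C D : Set Ag} {X : Set (Formula α Ag)}
    (hcan : IsCanState X₀ ((C, X) :: w)) (hD : D ⊆ C) (φ : Formula α Ag) :
    Formula.know D φ ∈ hd X₀ w ↔ Formula.know D φ ∈ X := by

  obtain ⟨hw, hXm, hsub⟩ := hcan
  have hhd := mcs_hd hX₀ hw
  constructor
  · intro h
    apply hsub
    show Formula.know C (Formula.know D φ) ∈ hd X₀ w
    have h4 := mcs_mp hhd (prov_posIntro D φ) h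
    exact mcs_mp hhd (Prov.mono (Formula.know D φ) hD) h4
  · intro h
    by_contra hn
    have hneg := mcs_not_mem_neg hhd hn
    have h5 := mcs_mp hhd (Prov.negIntro D φ) hneg
    have hC := mcs_mp hhd (Prov.mono (Formula.neg (Formula.know D φ)) hD) h5
    have : Formula.neg (Formula.know D φ) ∈ X := hsub hC
    exact mcs_neg_not_mem hXm this h
end

section
/- Canonical model H-truth lemma (positive direction): if H_C φ ∈ hd(w) then for any three canonical states w', u, u', the conditions w ∼_C w', (w',C,φ,u) ∈ M, and u ∼_C u' imply φ ∈ hd(u'). -/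
/-!
Strategic introspection puts `K_C H_C φ` into `hd w`. Formulas of the form `K_C ψ` are invariant
under `∼_C`: a `∼_C`-path runs through edges whose labels contain `C`, and such a formula crosses
an edge downwards by positive introspection (derived from truth and negative introspection) and
upwards by negative introspection. Hence `K_C H_C φ ∈ hd w'`, so `H_C φ ∈ hd w'` by truth, the
mechanism gives `K_C φ ∈ hd u`, transport gives `K_C φ ∈ hd u'`, and truth gives `φ ∈ hd u'`.
-/

variable {α Ag : Type}

namespace Prov

lemma mp_of_tautology {φ ψ : Formula α Ag} (h : Prov φ) (ht : Tautology (φ.imp ψ)) : Prov ψ :=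
  (Prov.taut ht).mp h

lemma imp_trans_s16 {φ ψ χ : Formula α Ag} (h₁ : Prov (φ.imp ψ)) (h₂ : Prov (ψ.imp χ)) :
    Prov (φ.imp χ) :=
  (h₁.mp_of_tautology fun v => by
    simp only [Formula.eval]
    cases φ.eval v <;> cases ψ.eval v <;> cases χ.eval v <;> rfl).mp h₂

lemma imp_neg_comm {φ ψ : Formula α Ag} (h : Prov (φ.imp ψ.neg)) : Prov (ψ.imp φ.neg) :=
  h.mp_of_tautology fun v => by
    simp only [Formula.eval]
    cases φ.eval v <;> cases ψ.eval v <;> rfl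

lemma neg_imp_comm {φ ψ : Formula α Ag} (h : Prov (φ.neg.imp ψ)) : Prov (ψ.neg.imp φ) :=
  h.mp_of_tautology fun v => by
    simp only [Formula.eval]
    cases φ.eval v <;> cases ψ.eval v <;> rfl

lemma know_imp_know_know (C : Set Ag) (ψ : Formula α Ag) :
    Prov ((Formula.know C ψ).imp (Formula.know C (Formula.know C ψ))) := by
  set K := Formula.know C ψ
  have hK : Prov (K.imp (Formula.know C K.neg).neg) := (Prov.truth C K.neg).imp_neg_comm
  have hdual : Prov ((Formula.know C K.neg).neg.imp K) := (Prov.negIntro C ψ).neg_imp_comm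
  exact (hK.imp_trans_s16 (Prov.negIntro C K.neg)).imp_trans_s16
    ((Prov.distrib C _ _).mp (Prov.necK C hdual))

end Prov

lemma ProvFrom.absurd {X : Set (Formula α Ag)} {φ : Formula α Ag} (h : ProvFrom X φ)
    (hn : ProvFrom X φ.neg) : ProvFrom X .bot := by
  have ht : Prov (φ.imp (φ.neg.imp .bot)) := Prov.taut fun v => by
    simp only [Formula.eval]
    cases φ.eval v <;> rfl
  exact ((ProvFrom.thm ht).mp h).mp hn

namespace MCS

variable {X : Set (Formula α Ag)} {φ ψ : Formula α Ag}

lemma mem_of_provFrom (hX : MCS X) (h : ProvFrom X φ) : φ ∈ X :=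
  (hX.2 φ).resolve_right fun hn => hX.1 (h.absurd (.hyp hn))

lemma mem_of_prov_imp (hX : MCS X) (h : Prov (φ.imp ψ)) (hφ : φ ∈ X) : ψ ∈ X :=
  hX.mem_of_provFrom ((ProvFrom.thm h).mp (.hyp hφ))

lemma neg_notMem (hX : MCS X) (h : φ ∈ X) : φ.neg ∉ X :=
  fun hn => hX.1 ((ProvFrom.hyp h).absurd (.hyp hn))

end MCS

lemma List.exists_longest_common_suffix {β : Type*} (v v' : List β) :
    ∃ L, L <:+ v ∧ L <:+ v' ∧ ∀ r, r <:+ v → r <:+ v' → r.length ≤ L.length := by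
  classical
  let P : ℕ → Prop := fun n => ∃ L, L.length = n ∧ L <:+ v ∧ L <:+ v'
  obtain ⟨L, hL, hLv, hLv'⟩ : P (Nat.findGreatest P v.length) :=
    Nat.findGreatest_spec (Nat.zero_le _) ⟨[], rfl, List.nil_suffix, List.nil_suffix⟩
  refine ⟨L, hLv, hLv', fun r hrv hrv' => ?_⟩
  rw [hL]
  exact Nat.le_findGreatest hrv.length_le ⟨r, rfl, hrv, hrv'⟩

lemma List.mem_take_length_sub_of_mem_left {β : Type*} {m L r : List β} {p : β}
    (hr : r.length ≤ L.length) (hp : p ∈ m) :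
    p ∈ (m ++ L).take ((m ++ L).length - r.length) := by
  rw [List.take_append, List.length_append, Nat.add_sub_assoc hr, List.take_of_length_le (by omega)]
  exact List.mem_append_left _ hp

variable {X₀ : Set (Formula α Ag)} {C : Set Ag} {ψ : Formula α Ag}

namespace CSimC

variable {v v' : List (Set Ag × Set (Formula α Ag))}

/-- The path between `v` and `v'` through their longest common suffix has all labels `⊇ C`:
for each agent the witnessing common suffix can only be shorter. -/
lemma exists_append_eq (h : CSimC C v v') :
    ∃ l l' L, v = l ++ L ∧ v' = l' ++ L ∧ (∀ p ∈ l, C ⊆ p.1) ∧ (∀ p ∈ l', C ⊆ p.1) := by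
  obtain ⟨L, ⟨l, rfl⟩, ⟨l', rfl⟩, hmax⟩ := List.exists_longest_common_suffix v v'
  refine ⟨l, l', L, rfl, rfl, fun p hp a ha => ?_, fun p hp a ha => ?_⟩
  · obtain ⟨r, hrv, hrv', hlab, -⟩ := h a ha
    exact hlab p (List.mem_take_length_sub_of_mem_left (hmax r hrv hrv') hp)
  · obtain ⟨r, hrv, hrv', -, hlab'⟩ := h a ha
    exact hlab' p (List.mem_take_length_sub_of_mem_left (hmax r hrv hrv') hp)

end CSimC

namespace IsCanState

lemma mcs_hd (hX₀ : MCS X₀) {w : List (Set Ag × Set (Formula α Ag))} (hw : IsCanState X₀ w) :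
    MCS (hd X₀ w) := by
  cases w with
  | nil => exact hX₀
  | cons p l => exact hw.2.1

variable {D : Set Ag} {X : Set (Formula α Ag)} {w : List (Set Ag × Set (Formula α Ag))}

lemma mem_of_know_mem_of_subset (hX₀ : MCS X₀) (hw : IsCanState X₀ ((D, X) :: w)) (hCD : C ⊆ D)
    (h : Formula.know C ψ ∈ hd X₀ w) : ψ ∈ X :=
  hw.2.2 ((hw.1.mcs_hd hX₀).mem_of_prov_imp (Prov.mono ψ hCD) h)

lemma know_mem_iff_of_cons (hX₀ : MCS X₀) (hw : IsCanState X₀ ((D, X) :: w)) (hCD : C ⊆ D) :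
    Formula.know C ψ ∈ X ↔ Formula.know C ψ ∈ hd X₀ w := by
  have hm := hw.1.mcs_hd hX₀
  refine ⟨fun h => ?_, fun h => ?_⟩
  · refine ((hm.2 _).resolve_right fun hn => hw.2.1.neg_notMem h ?_)
    exact hw.mem_of_know_mem_of_subset hX₀ hCD (hm.mem_of_prov_imp (Prov.negIntro C ψ) hn)
  · exact hw.mem_of_know_mem_of_subset hX₀ hCD
      (hm.mem_of_prov_imp (Prov.know_imp_know_know C ψ) h)

lemma know_mem_hd_append_iff (hX₀ : MCS X₀) {l r : List (Set Ag × Set (Formula α Ag))}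
    (hw : IsCanState X₀ (l ++ r)) (hl : ∀ p ∈ l, C ⊆ p.1) :
    Formula.know C ψ ∈ hd X₀ (l ++ r) ↔ Formula.know C ψ ∈ hd X₀ r := by
  induction l with
  | nil => rfl
  | cons p l ih =>
    obtain ⟨D, X⟩ := p
    exact (know_mem_iff_of_cons hX₀ hw (hl _ List.mem_cons_self)).trans
      (ih hw.1 fun q hq => hl q (List.mem_cons_of_mem _ hq))

lemma know_mem_of_csimC (hX₀ : MCS X₀) {v v' : List (Set Ag × Set (Formula α Ag))}
    (hv : IsCanState X₀ v) (hv' : IsCanState X₀ v') (hsim : CSimC C v v')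
    (hK : Formula.know C ψ ∈ hd X₀ v) : Formula.know C ψ ∈ hd X₀ v' := by
  obtain ⟨l, l', L, rfl, rfl, hl, hl'⟩ := hsim.exists_append_eq
  exact (know_mem_hd_append_iff hX₀ hv' hl').2 ((know_mem_hd_append_iff hX₀ hv hl).1 hK)

end IsCanState

/-- Canonical H-truth lemma (positive direction): if `H_C φ ∈ hd w`,
`w ∼_C w'`, `(w',C,φ,u) ∈ M`, and `u ∼_C u'`, then `φ ∈ hd u'`. -/
theorem how_all {α Ag : Type} {X₀ : Set (Formula α Ag)} (hX₀ : MCS X₀)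
    {w w' u u' : List (Set Ag × Set (Formula α Ag))} {C : Set Ag}
    {φ : Formula α Ag}
    (hw : IsCanState X₀ w) (hw' : IsCanState X₀ w')
    (hu : IsCanState X₀ u) (hu' : IsCanState X₀ u')
    (h : Formula.how C φ ∈ hd X₀ w)
    (h1 : CSimC C w w') (h2 : CanM X₀ w' C φ u) (h3 : CSimC C u u') :
    φ ∈ hd X₀ u' := by
  have hKw : Formula.know C (Formula.how C φ) ∈ hd X₀ w :=
    (hw.mcs_hd hX₀).mem_of_prov_imp (Prov.stratIntro C φ) h
  have hHw' : Formula.how C φ ∈ hd X₀ w' :=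
    (hw'.mcs_hd hX₀).mem_of_prov_imp (Prov.truth C _) (hw.know_mem_of_csimC hX₀ hw' h1 hKw)
  have hKu' : Formula.know C φ ∈ hd X₀ u' := hu.know_mem_of_csimC hX₀ hu' h3 (h2.2 hHw')
  exact (hu'.mcs_hd hX₀).mem_of_prov_imp (Prov.truth C φ) hKu'
end
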